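/- The ring A = ⋃_{C>0} A_C is a discrete valuation ring: it is a local integral domain, its maximal ideal is the principal ideal t·A = {f ∈ A : f(0) = 0}, its residue field is isomorphic to ℂ via evaluation of the constant coefficient, and every nonzero f ∈ A can be written uniquely as f = t^n · u where n is the t-adic order of f and u is a unit of A. -/

import Mathlib

open scoped ENNReal

/-- The norm `‖f‖_C = ∑_{j=0}^∞ |a_j| C^j / j!` of a formal power series
`f = ∑ a_j t^j ∈ ℂ[[t]]`, valued in `[0,∞]`. -/
noncomputable def normC (C : ℝ) (f : PowerSeries ℂ) : ℝ≥0∞ :=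
  ∑' j : ℕ, (‖(PowerSeries.coeff j) f‖₊ : ℝ≥0∞) * ENNReal.ofReal (C ^ j / (j.factorial : ℝ))

/-- `A_C = {f ∈ ℂ[[t]] : ‖f‖_C < ∞}`. -/
def Asub (C : ℝ) : Set (PowerSeries ℂ) := {f | normC C f < ⊤}


/-- `A = ⋃_{C>0} A_C`. -/
def Afull : Set (PowerSeries ℂ) := {f | ∃ C > (0 : ℝ), f ∈ Asub C}

/-!
Membership in `A` amounts to a Gevrey bound `‖aⱼ‖ ≤ M rʲ j!` on the coefficients. Such bounds
survive cancelling a factor `t` (because `j + 1 ≤ 2ʲ`) and inverting a series with nonzero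
constant term (induction on the recursion for the coefficients of `f⁻¹`, using
`i! j! ≤ (i + j)!`). A subring of `K⟦X⟧` containing `X` and the constants and having these two
closure properties inherits the structure of `K⟦X⟧`: its units are the series with nonzero
constant term, and every nonzero element is `Xⁿ` times a unit, with `n` its order; so it is a
discrete valuation ring with uniformizer `X` and residue field `K`.
-/

open PowerSeries Finset
open scoped Nat

theorem Finset.Nat.sum_antidiagonal_ite_snd_lt {M : Type*} [AddCommMonoid M] (F : ℕ × ℕ → M)
    (n : ℕ) :
    ∑ p ∈ antidiagonal n, (if p.2 < n then F p else 0) = ∑ j ∈ range n, F (n - j, j) := by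
  rw [← Finset.Nat.sum_antidiagonal_swap]
  simp only [Prod.snd_swap]
  rw [Finset.Nat.sum_antidiagonal_eq_sum_range_succ_mk, sum_range_succ, if_neg (lt_irrefl n),
    add_zero]
  exact sum_congr rfl fun j hj => if_pos (mem_range.1 hj)

section Gevrey

variable {𝕜 : Type*}

def IsGevrey [NormedRing 𝕜] (f : 𝕜⟦X⟧) : Prop :=
  ∃ M r : ℝ, 0 < r ∧ ∀ j, ‖coeff j f‖ ≤ M * r ^ j * j !

theorem IsGevrey.of_norm_coeff_le [NormedRing 𝕜] {f : 𝕜⟦X⟧} {M : ℝ}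
    (hf : ∀ j, ‖coeff j f‖ ≤ M) : IsGevrey f := by
  refine ⟨M, 1, one_pos, fun j => ?_⟩
  have hM : 0 ≤ M := (norm_nonneg _).trans (hf 0)
  calc ‖coeff j f‖ ≤ M := hf j
    _ ≤ M * 1 ^ j * j ! := by
      rw [one_pow, mul_one]; exact le_mul_of_one_le_right hM (mod_cast j.factorial_pos)

theorem isGevrey_X [NormedRing 𝕜] : IsGevrey (X : 𝕜⟦X⟧) :=
  IsGevrey.of_norm_coeff_le (M := ‖(1 : 𝕜)‖) fun j => by rw [coeff_X]; split_ifs <;> simp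

theorem isGevrey_C [NormedRing 𝕜] (c : 𝕜) : IsGevrey (C c) :=
  IsGevrey.of_norm_coeff_le (M := ‖c‖) fun j => by rw [coeff_C]; split_ifs <;> simp

theorem IsGevrey.of_X_mul [NormedRing 𝕜] {f : 𝕜⟦X⟧} (hf : IsGevrey (X * f)) : IsGevrey f := by
  obtain ⟨M, r, hr, hf⟩ := hf
  refine ⟨M * r, 2 * r, by positivity, fun j => ?_⟩
  have hM : 0 ≤ M := by simpa using (norm_nonneg _).trans (hf 0)
  have hsucc : ((j + 1 : ℕ) : ℝ) ≤ 2 ^ j := mod_cast Nat.lt_two_pow_self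
  calc ‖coeff j f‖ = ‖coeff (j + 1) (X * f)‖ := by rw [coeff_succ_X_mul]
    _ ≤ M * r ^ (j + 1) * (j + 1)! := hf (j + 1)
    _ = M * r * r ^ j * j ! * (j + 1 : ℕ) := by push_cast [Nat.factorial_succ]; ring
    _ ≤ M * r * r ^ j * j ! * 2 ^ j := by gcongr
    _ = M * r * (2 * r) ^ j * j ! := by ring

theorem norm_coeff_inv_le [NormedField 𝕜] {f : 𝕜⟦X⟧} {M r : ℝ} (hr : 0 ≤ r)
    (hf : ∀ j, ‖coeff j f‖ ≤ M * r ^ j * j !) (h0 : constantCoeff f ≠ 0) (n : ℕ) :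
    ‖coeff n f⁻¹‖ ≤ ‖constantCoeff f‖⁻¹ * ((1 + M * ‖constantCoeff f‖⁻¹) * r) ^ n * n ! := by
  set B := ‖constantCoeff f‖⁻¹
  set s := (1 + M * B) * r
  have hM : 0 ≤ M := by simpa using (norm_nonneg _).trans (hf 0)
  induction n using Nat.strong_induction_on with
  | _ n ih =>
  rcases n.eq_zero_or_pos with rfl | hn
  · simp [coeff_inv, B]
  have hterm : ∀ j < n,
      ‖coeff (n - j) f * coeff j f⁻¹‖ ≤ M * B * n ! * (r ^ (n - j) * s ^ j) := by
    intro j hj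
    have hfac : ((j ! * (n - j)! : ℕ) : ℝ) ≤ n ! :=
      mod_cast Nat.le_of_dvd n.factorial_pos (Nat.factorial_mul_factorial_dvd_factorial hj.le)
    rw [norm_mul]
    calc _ ≤ (M * r ^ (n - j) * (n - j)!) * (B * s ^ j * j !) :=
          mul_le_mul (hf _) (ih j hj) (norm_nonneg _) (by positivity)
      _ = M * B * ((j ! * (n - j)! : ℕ) : ℝ) * (r ^ (n - j) * s ^ j) := by push_cast; ring
      _ ≤ M * B * n ! * (r ^ (n - j) * s ^ j) := by gcongr
  -- `s = (1 + M B) r` is chosen so that this sum telescopes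
  have hgeom : M * B * ∑ j ∈ range n, r ^ (n - j) * s ^ j = s ^ n - r ^ n := by
    rw [← geom_sum₂_mul, mul_sum, sum_mul]
    refine sum_congr rfl fun j hj => ?_
    rw [show n - j = n - 1 - j + 1 by have := mem_range.1 hj; omega]
    ring
  calc ‖coeff n f⁻¹‖ = B * ‖∑ j ∈ range n, coeff (n - j) f * coeff j f⁻¹‖ := by
        rw [coeff_inv, if_neg hn.ne', Finset.Nat.sum_antidiagonal_ite_snd_lt, norm_mul, norm_neg,
          norm_inv]
    _ ≤ B * ∑ j ∈ range n, M * B * n ! * (r ^ (n - j) * s ^ j) := by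
        gcongr
        exact (norm_sum_le _ _).trans (sum_le_sum fun j hj => hterm j (mem_range.1 hj))
    _ = B * n ! * (s ^ n - r ^ n) := by rw [← mul_sum, ← hgeom]; ring
    _ ≤ B * n ! * s ^ n := by gcongr; exact sub_le_self _ (by positivity)
    _ = B * s ^ n * n ! := by ring

theorem IsGevrey.inv [NormedField 𝕜] {f : 𝕜⟦X⟧} (hf : IsGevrey f) (h0 : constantCoeff f ≠ 0) :
    IsGevrey f⁻¹ := by
  obtain ⟨M, r, hr, hf⟩ := hf
  have hM : 0 ≤ M := by simpa using (norm_nonneg _).trans (hf 0)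
  exact ⟨_, _, by positivity, norm_coeff_inv_le hr.le hf h0⟩

theorem normC_eq_tsum_ofReal (C : ℝ) (f : ℂ⟦X⟧) :
    normC C f = ∑' j, ENNReal.ofReal (‖coeff j f‖ * (C ^ j / j !)) := by
  simp only [normC, ENNReal.ofReal_mul (norm_nonneg _), ofReal_norm, enorm_eq_nnnorm]

theorem IsGevrey.of_normC_lt_top {C : ℝ} (hC : 0 < C) {f : ℂ⟦X⟧} (h : normC C f < ⊤) :
    IsGevrey f := by
  refine ⟨(normC C f).toReal, C⁻¹, inv_pos.2 hC, fun j => ?_⟩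
  have hj : ENNReal.ofReal (‖coeff j f‖ * (C ^ j / j !)) ≤ normC C f := by
    rw [normC_eq_tsum_ofReal]; exact ENNReal.le_tsum j
  calc ‖coeff j f‖ = ‖coeff j f‖ * (C ^ j / j !) * (C⁻¹ ^ j * j !) := by
        rw [inv_pow]; field_simp
    _ ≤ (normC C f).toReal * (C⁻¹ ^ j * j !) := by
        gcongr; exact (ENNReal.ofReal_le_iff_le_toReal h.ne).1 hj
    _ = _ := by ring

theorem normC_inv_two_mul_lt_top {f : ℂ⟦X⟧} {M r : ℝ} (hr : 0 < r)
    (hf : ∀ j, ‖coeff j f‖ ≤ M * r ^ j * j !) : normC (2 * r)⁻¹ f < ⊤ := by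
  have hterm : ∀ j, ‖coeff j f‖ * ((2 * r)⁻¹ ^ j / j !) ≤ M * (1 / 2) ^ j := fun j =>
    calc _ ≤ M * r ^ j * j ! * ((2 * r)⁻¹ ^ j / j !) := by gcongr; exact hf j
      _ = M * (1 / 2) ^ j := by
        rw [inv_pow, mul_pow]; field_simp; rw [mul_assoc, ← mul_pow]; norm_num
  have hsum : Summable fun j => ‖coeff j f‖ * ((2 * r)⁻¹ ^ j / j !) :=
    (summable_geometric_two.mul_left M).of_nonneg_of_le (fun j => by positivity) hterm
  rw [normC_eq_tsum_ofReal, ← ENNReal.ofReal_tsum_of_nonneg (fun j => by positivity) hsum]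
  exact ENNReal.ofReal_lt_top

theorem mem_Afull_iff_isGevrey (f : ℂ⟦X⟧) : f ∈ Afull ↔ IsGevrey f :=
  ⟨fun ⟨_, hC, hf⟩ => .of_normC_lt_top hC hf,
    fun ⟨_, r, hr, hf⟩ => ⟨(2 * r)⁻¹, by positivity, normC_inv_two_mul_lt_top hr hf⟩⟩

end Gevrey

namespace PowerSeries

variable {K : Type*} [Field K]

theorem order_X_pow_mul_of_constantCoeff_ne_zero {u : K⟦X⟧} (hu : constantCoeff u ≠ 0) (n : ℕ) :
    order (X ^ n * u) = n := by
  rw [order_mul, order_X_pow, order_zero_of_unit (isUnit_iff_constantCoeff.2 hu.isUnit), add_zero]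

variable {S : Subring K⟦X⟧}

theorem Subring.isUnit_iff_constantCoeff_ne_zero
    (hinv : ∀ f ∈ S, constantCoeff f ≠ 0 → f⁻¹ ∈ S) {f : S} :
    IsUnit f ↔ constantCoeff (f : K⟦X⟧) ≠ 0 := by
  refine ⟨fun hf => isUnit_iff_ne_zero.1 (isUnit_iff_constantCoeff.1 (hf.map S.subtype)),
    fun h0 => IsUnit.of_mul_eq_one (a := f) ⟨_, hinv _ f.2 h0⟩
      (Subtype.ext (PowerSeries.mul_inv_cancel _ h0))⟩

theorem Subring.isLocalRing (hinv : ∀ f ∈ S, constantCoeff f ≠ 0 → f⁻¹ ∈ S) : IsLocalRing S :=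
  IsLocalRing.of_isUnit_or_isUnit_one_sub_self fun f => by
    simp only [Subring.isUnit_iff_constantCoeff_ne_zero hinv]
    by_cases h : constantCoeff (f : K⟦X⟧) = 0 <;> simp [h]

theorem Subring.coe_maximalIdeal [IsLocalRing S]
    (hinv : ∀ f ∈ S, constantCoeff f ≠ 0 → f⁻¹ ∈ S) :
    (IsLocalRing.maximalIdeal S : Set S) = {f : S | constantCoeff (f : K⟦X⟧) = 0} := by
  ext f
  simp [Subring.isUnit_iff_constantCoeff_ne_zero hinv]

theorem Subring.mem_of_X_pow_mul_mem (hdiv : ∀ f, X * f ∈ S → f ∈ S) {f : K⟦X⟧} :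
    ∀ {n : ℕ}, X ^ n * f ∈ S → f ∈ S
  | 0, h => by simpa using h
  | n + 1, h =>
    Subring.mem_of_X_pow_mul_mem hdiv (hdiv (X ^ n * f) (by rwa [pow_succ', mul_assoc] at h))

theorem Subring.coe_maximalIdeal_eq_X_mul [IsLocalRing S]
    (hinv : ∀ f ∈ S, constantCoeff f ≠ 0 → f⁻¹ ∈ S) (hdiv : ∀ f, X * f ∈ S → f ∈ S) :
    (IsLocalRing.maximalIdeal S : Set S) = {f : S | ∃ g : S, (f : K⟦X⟧) = X * (g : K⟦X⟧)} := by
  rw [Subring.coe_maximalIdeal hinv]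
  ext f
  refine ⟨fun h => ?_, fun ⟨g, hg⟩ => by simp [hg]⟩
  obtain ⟨g, hg⟩ := X_dvd_iff.2 h
  exact ⟨⟨g, hdiv g (hg ▸ f.2)⟩, hg⟩

theorem Subring.exists_X_pow_order_mul_isUnit (hinv : ∀ f ∈ S, constantCoeff f ≠ 0 → f⁻¹ ∈ S)
    (hdiv : ∀ f, X * f ∈ S → f ∈ S) {f : S} (hf : f ≠ 0) :
    ∃ n : ℕ, ∃ u : S, IsUnit u ∧
      (f : K⟦X⟧) = X ^ n * (u : K⟦X⟧) ∧ order (f : K⟦X⟧) = n ∧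
      ∀ (m : ℕ) (v : S), IsUnit v → (f : K⟦X⟧) = X ^ m * (v : K⟦X⟧) → m = n ∧ v = u := by
  have hf' : (f : K⟦X⟧) ≠ 0 := by simpa using hf
  set n := (order (f : K⟦X⟧)).toNat
  have hfactor : X ^ n * divXPowOrder (f : K⟦X⟧) = (f : K⟦X⟧) := X_pow_order_mul_divXPowOrder
  have hu0 : constantCoeff (divXPowOrder (f : K⟦X⟧)) ≠ 0 :=
    constantCoeff_divXPowOrder_eq_zero_iff.not.2 hf'
  have horder : order (f : K⟦X⟧) = n := by
    rw [← hfactor, order_X_pow_mul_of_constantCoeff_ne_zero hu0]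
  refine ⟨n, ⟨_, Subring.mem_of_X_pow_mul_mem hdiv (hfactor ▸ f.2)⟩,
    (Subring.isUnit_iff_constantCoeff_ne_zero hinv).2 hu0, hfactor.symm, horder,
    fun m v hv hfv => ?_⟩
  obtain rfl : m = n := by
    have := order_X_pow_mul_of_constantCoeff_ne_zero
      ((Subring.isUnit_iff_constantCoeff_ne_zero hinv).1 hv) m
    rw [← hfv, horder] at this
    exact_mod_cast this.symm
  exact ⟨rfl, Subtype.ext (X_pow_mul_cancel (hfv.symm.trans hfactor.symm))⟩

theorem Subring.irreducible_X (hX : X ∈ S) (hinv : ∀ f ∈ S, constantCoeff f ≠ 0 → f⁻¹ ∈ S) :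
    Irreducible (⟨X, hX⟩ : S) := by
  refine ⟨fun h => ?_, fun a b hab => ?_⟩
  · simpa using (Subring.isUnit_iff_constantCoeff_ne_zero hinv).1 h
  · simp only [Subring.isUnit_iff_constantCoeff_ne_zero hinv, ← isUnit_iff_ne_zero,
      ← isUnit_iff_constantCoeff]
    exact X_irreducible.isUnit_or_isUnit (congrArg Subtype.val hab)

theorem Subring.isDiscreteValuationRing (hX : X ∈ S)
    (hinv : ∀ f ∈ S, constantCoeff f ≠ 0 → f⁻¹ ∈ S) (hdiv : ∀ f, X * f ∈ S → f ∈ S) :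
    IsDiscreteValuationRing S := by
  refine .ofHasUnitMulPowIrreducibleFactorization
    ⟨_, Subring.irreducible_X hX hinv, fun hf => ?_⟩
  obtain ⟨n, u, hu, hfu, -⟩ := Subring.exists_X_pow_order_mul_isUnit hinv hdiv hf
  exact ⟨n, hu.unit, Subtype.ext (by simp [hfu, mul_comm])⟩

theorem Subring.exists_residueField_equiv [IsLocalRing S] (hC : ∀ c, C c ∈ S)
    (hinv : ∀ f ∈ S, constantCoeff f ≠ 0 → f⁻¹ ∈ S) :
    ∃ e : IsLocalRing.ResidueField S ≃+* K,
      ∀ f : S, e (IsLocalRing.residue S f) = constantCoeff (f : K⟦X⟧) := by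
  let ev : S →+* K := constantCoeff.comp S.subtype
  have hsurj : Function.Surjective ev := fun c => ⟨⟨C c, hC c⟩, constantCoeff_C c⟩
  have hker : RingHom.ker ev = IsLocalRing.maximalIdeal S :=
    SetLike.coe_injective (Subring.coe_maximalIdeal hinv).symm
  exact ⟨(Ideal.quotEquivOfEq hker.symm).trans (RingHom.quotientKerEquivOfSurjective hsurj),
    fun f => rfl⟩

end PowerSeries

/-- `A = ⋃_{C>0} A_C` (realized as any subring `S` of `ℂ[[t]]` with carrier
`A`) is a discrete valuation ring: a local integral domain whose maximal ideal
is the principal ideal `t·A = {f ∈ A : f(0) = 0}`, whose residue field is `ℂ`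
via the constant coefficient, and in which every nonzero `f` factors uniquely
as `f = tⁿ·u` with `n` the `t`-adic order of `f` and `u` a unit. -/
theorem statement_11 (S : Subring (PowerSeries ℂ))
    (hS : (S : Set (PowerSeries ℂ)) = Afull) :
    IsDomain S ∧
    IsLocalRing S ∧
    IsDiscreteValuationRing S ∧
    (∀ h : IsLocalRing S,
      ((IsLocalRing.maximalIdeal S : Set S) =
        {f : S | PowerSeries.constantCoeff (f : PowerSeries ℂ) = 0}) ∧
      ((IsLocalRing.maximalIdeal S : Set S) =
        {f : S | ∃ g : S, (f : PowerSeries ℂ) = PowerSeries.X * (g : PowerSeries ℂ)}) ∧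
      ∃ e : IsLocalRing.ResidueField S ≃+* ℂ,
        ∀ f : S, e (IsLocalRing.residue S f) =
          PowerSeries.constantCoeff (f : PowerSeries ℂ)) ∧
    (∀ f : S, f ≠ 0 →
      ∃ n : ℕ, ∃ u : S, IsUnit u ∧
        (f : PowerSeries ℂ) = PowerSeries.X ^ n * (u : PowerSeries ℂ) ∧
        PowerSeries.order (f : PowerSeries ℂ) = n ∧
        (∀ (m : ℕ) (v : S), IsUnit v →
          (f : PowerSeries ℂ) = PowerSeries.X ^ m * (v : PowerSeries ℂ) →
            m = n ∧ v = u)) := by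
  have hmem (f : ℂ⟦X⟧) : f ∈ S ↔ IsGevrey f := by
    rw [← SetLike.mem_coe, hS, mem_Afull_iff_isGevrey]
  have hX : X ∈ S := (hmem _).2 isGevrey_X
  have hC (c : ℂ) : C c ∈ S := (hmem _).2 (isGevrey_C c)
  have hinv (f) (hf : f ∈ S) (h0 : constantCoeff f ≠ 0) : f⁻¹ ∈ S :=
    (hmem _).2 (((hmem f).1 hf).inv h0)
  have hdiv (f) (hf : X * f ∈ S) : f ∈ S := (hmem _).2 ((hmem _).1 hf).of_X_mul
  have hlocal := Subring.isLocalRing hinv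
  exact ⟨inferInstance, hlocal, Subring.isDiscreteValuationRing hX hinv hdiv,
    fun _ => ⟨Subring.coe_maximalIdeal hinv, Subring.coe_maximalIdeal_eq_X_mul hinv hdiv,
      Subring.exists_residueField_equiv hC hinv⟩,
    fun _ hf => Subring.exists_X_pow_order_mul_isUnit hinv hdiv hf⟩
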